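/- Let H be a real Hilbert space and F : H → ℝ differentiable with gradient ∇F satisfying ⟨∇F(x) − ∇F(y), x − y⟩ ≥ μ‖x − y‖² and ‖∇F(x) − ∇F(y)‖ ≤ L‖x − y‖ for all x, y ∈ H, with 0 < μ ≤ L, and let z* be the (unique) point with ∇F(z*) = 0. Let (Ω, 𝔉, P) be a probability space with a filtration (𝔉_k)_{k∈ℕ}, let z₀ ∈ H be deterministic, and let (z_k)_{k∈ℕ} and (g_k)_{k∈ℕ} be sequences of square-integrable H-valued random variables such that: z_k is 𝔉_k-measurable, z_{k+1} = z_k − α g_k pointwise, and E[‖g_k − ∇F(z_k)‖² | 𝔉_k] ≤ θ² ‖∇F(z_k)‖² P-a.s. for every k. If α ∈ (0, 2/(μ + L)] and 0 ≤ θ < μ/L, then with ϱ := 1 − α(μ − θL) one has ϱ ∈ [0, 1) and the iterates converge linearly in expectation: E[‖z_k − z*‖] ≤ ϱ^k ‖z₀ − z*‖ for all k ∈ ℕ. -/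

import Mathlib

/-!
For `μ`-strongly monotone, `L`-Lipschitz `∇F`, the function `F - μ/2 ‖·‖²` is convex with
`(L - μ)`-smooth gradient, hence that gradient is co-coercive; this yields
`‖∇F x - ∇F y‖² + μL ‖x - y‖² ≤ (μ + L) ⟪∇F x - ∇F y, x - y⟫`, which makes the exact gradient
step with `α ≤ 2 / (μ + L)` a `(1 - αμ)`-contraction towards `z*`. The sampling error adds
`α ‖g_k - ∇F(z_k)‖`, whose `L²` norm the norm test bounds by
`θ ‖∇F(z_k)‖_{L²} ≤ θL ‖z_k - z*‖_{L²}`.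
By Minkowski's inequality `‖z_{k+1} - z*‖_{L²} ≤ ϱ ‖z_k - z*‖_{L²}`, and on a probability space
the `L¹` norm is dominated by the `L²` norm.
-/

open MeasureTheory Set
open scoped RealInnerProductSpace ENNReal

section InnerProduct

variable {H : Type*} [NormedAddCommGroup H] [InnerProductSpace ℝ H]

theorem add_inner_add_sq_norm_sub_le_of_quadratic_bounds {h : H → ℝ} {G : H → H} {M : ℝ}
    (hM : 0 < M) (low : ∀ x y, h x + ⟪G x, y - x⟫ ≤ h y)
    (up : ∀ x y, h y ≤ h x + ⟪G x, y - x⟫ + M / 2 * ‖y - x‖ ^ 2) (x y : H) :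
    h x + ⟪G x, y - x⟫ + ‖G y - G x‖ ^ 2 / (2 * M) ≤ h y := by
  set d := G y - G x
  -- compare both bounds at the point reached from `y` by a gradient step of length `1 / M`
  set c := y - M⁻¹ • d
  have hlow := low x c
  have hup := up y c
  rw [show c - x = (y - x) - M⁻¹ • d by simp only [c]; abel, inner_sub_right,
    real_inner_smul_right] at hlow
  rw [show c - y = -(M⁻¹ • d) by simp only [c]; abel, inner_neg_right, real_inner_smul_right,
    norm_neg, norm_smul, Real.norm_of_nonneg (inv_nonneg.2 hM.le)] at hup
  have hd : ⟪G y, d⟫ - ⟪G x, d⟫ = ‖d‖ ^ 2 := by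
    rw [← inner_sub_left, real_inner_self_eq_norm_sq]
  have hquad : M / 2 * (M⁻¹ * ‖d‖) ^ 2 = ‖d‖ ^ 2 / (2 * M) := by field_simp
  have hlin : M⁻¹ * ⟪G y, d⟫ - M⁻¹ * ⟪G x, d⟫ = ‖d‖ ^ 2 / M := by
    rw [← mul_sub, hd, inv_mul_eq_div]
  have hhalf : ‖d‖ ^ 2 / M - ‖d‖ ^ 2 / (2 * M) = ‖d‖ ^ 2 / (2 * M) := by field_simp; ring
  linarith

theorem sq_norm_sub_le_mul_inner_of_quadratic_bounds {h : H → ℝ} {G : H → H} {M : ℝ}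
    (hM : 0 < M) (low : ∀ x y, h x + ⟪G x, y - x⟫ ≤ h y)
    (up : ∀ x y, h y ≤ h x + ⟪G x, y - x⟫ + M / 2 * ‖y - x‖ ^ 2) (x y : H) :
    ‖G x - G y‖ ^ 2 ≤ M * ⟪G x - G y, x - y⟫ := by
  have hxy := add_inner_add_sq_norm_sub_le_of_quadratic_bounds hM low up x y
  have hyx := add_inner_add_sq_norm_sub_le_of_quadratic_bounds hM low up y x
  have hsum : ⟪G x, y - x⟫ + ⟪G y, x - y⟫ = -⟪G x - G y, x - y⟫ := by
    rw [← neg_sub x y, inner_neg_right, inner_sub_left]; ring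
  rw [norm_sub_rev] at hxy
  have : ‖G x - G y‖ ^ 2 / M ≤ ⟪G x - G y, x - y⟫ := by
    have : ‖G x - G y‖ ^ 2 / (2 * M) + ‖G x - G y‖ ^ 2 / (2 * M) = ‖G x - G y‖ ^ 2 / M := by
      field_simp; ring
    linarith
  rwa [div_le_iff₀' hM] at this

theorem norm_sub_smul_le_of_inner_bounds {w D : H} {μ L α : ℝ} (hμ : 0 < μ) (hμL : μ ≤ L)
    (hmono : μ * ‖w‖ ^ 2 ≤ ⟪D, w⟫) (hcoco : ‖D‖ ^ 2 + μ * L * ‖w‖ ^ 2 ≤ (μ + L) * ⟪D, w⟫)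
    (hα : 0 ≤ α) (hαL : α * (μ + L) ≤ 2) : ‖w - α • D‖ ≤ (1 - α * μ) * ‖w‖ := by
  have hαμ : 0 ≤ 1 - α * μ := by nlinarith
  have hD : μ * ‖w‖ ≤ ‖D‖ := by
    rcases (norm_nonneg w).eq_or_lt with hw | hw
    · rw [← hw, mul_zero]; exact norm_nonneg D
    · have := hmono.trans (real_inner_le_norm D w)
      nlinarith
  have hexpand : ‖w - α • D‖ ^ 2 = ‖w‖ ^ 2 - 2 * α * ⟪D, w⟫ + α ^ 2 * ‖D‖ ^ 2 := by
    rw [norm_sub_sq_real, real_inner_smul_right, norm_smul, Real.norm_of_nonneg hα,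
      real_inner_comm]
    ring
  have hsq : (μ + L) * ‖w - α • D‖ ^ 2 ≤ (μ + L) * ((1 - α * μ) * ‖w‖) ^ 2 := by
    rw [hexpand]
    have : 0 ≤ α * (2 - α * (μ + L)) * (‖D‖ ^ 2 - (μ * ‖w‖) ^ 2) :=
      mul_nonneg (mul_nonneg hα (by linarith))
        (sub_nonneg.2 (pow_le_pow_left₀ (by positivity) hD 2))
    nlinarith
  exact (pow_le_pow_iff_left₀ (norm_nonneg _) (by positivity) two_ne_zero).1
    (le_of_mul_le_mul_left hsq (by linarith))

end InnerProduct

theorem le_add_deriv_add_half_of_deriv_sub_le {φ φ' : ℝ → ℝ}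
    (hφ : ∀ t, HasDerivAt φ (φ' t) t) {c : ℝ} (h : ∀ t ∈ Ioo (0 : ℝ) 1, φ' t - φ' 0 ≤ c * t) :
    φ 1 ≤ φ 0 + φ' 0 + c / 2 := by
  set ψ : ℝ → ℝ := fun t => φ t - t * φ' 0 - c / 2 * t ^ 2
  have hψ : ∀ t, HasDerivAt ψ (φ' t - φ' 0 - c * t) t := fun t => by
    refine (((hφ t).sub ((hasDerivAt_id t).mul_const (φ' 0))).sub
      ((hasDerivAt_pow 2 t).const_mul (c / 2))).congr_deriv ?_
    push_cast; ring
  have hanti : AntitoneOn ψ (Icc 0 1) :=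
    antitoneOn_of_hasDerivWithinAt_nonpos (convex_Icc 0 1)
      (fun t _ => (hψ t).continuousAt.continuousWithinAt) (fun t _ => (hψ t).hasDerivWithinAt)
      (fun t ht => by rw [interior_Icc] at ht; linarith [h t ht])
  have := hanti (left_mem_Icc.2 zero_le_one) (right_mem_Icc.2 zero_le_one) zero_le_one
  norm_num [ψ] at this
  linarith

section Gradient

variable {H : Type*} [NormedAddCommGroup H] [InnerProductSpace ℝ H] [CompleteSpace H]

theorem HasGradientAt.hasDerivAt_comp_add_smul {F : H → ℝ} {g x v : H} {t : ℝ}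
    (h : HasGradientAt F g (x + t • v)) : HasDerivAt (fun s : ℝ => F (x + s • v)) ⟪g, v⟫ t := by
  have hline : HasDerivAt (fun s : ℝ => x + s • v) v t := by
    simpa using ((hasDerivAt_id t).smul_const v).const_add x
  have hcomp := h.hasFDerivAt.comp_hasDerivAt t hline
  simp only [InnerProductSpace.toDual_apply_apply] at hcomp
  exact hcomp

variable {F : H → ℝ} {F' : H → H}

theorem le_add_inner_add_sq_of_lipschitz_gradient (hF : ∀ x, HasGradientAt F (F' x) x) {L : ℝ}
    (hlip : ∀ x y, ‖F' x - F' y‖ ≤ L * ‖x - y‖) (x y : H) :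
    F y ≤ F x + ⟪F' x, y - x⟫ + L / 2 * ‖y - x‖ ^ 2 := by
  set v := y - x
  have key := le_add_deriv_add_half_of_deriv_sub_le (φ := fun t => F (x + t • v))
    (fun t => (hF _).hasDerivAt_comp_add_smul) (c := L * ‖v‖ ^ 2) fun t ht => by
      calc ⟪F' (x + t • v), v⟫ - ⟪F' (x + (0 : ℝ) • v), v⟫
          = ⟪F' (x + t • v) - F' x, v⟫ := by rw [zero_smul, add_zero, inner_sub_left]
        _ ≤ ‖F' (x + t • v) - F' x‖ * ‖v‖ := real_inner_le_norm _ _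
        _ ≤ L * ‖t • v‖ * ‖v‖ := by
          gcongr; simpa using hlip (x + t • v) x
        _ = L * ‖v‖ ^ 2 * t := by rw [norm_smul, Real.norm_of_nonneg ht.1.le]; ring
  simp only [zero_smul, add_zero, one_smul, v, add_sub_cancel] at key
  linarith

theorem add_inner_add_sq_le_of_strongly_monotone_gradient (hF : ∀ x, HasGradientAt F (F' x) x)
    {μ : ℝ} (hsc : ∀ x y, μ * ‖x - y‖ ^ 2 ≤ ⟪F' x - F' y, x - y⟫) (x y : H) :
    F x + ⟪F' x, y - x⟫ + μ / 2 * ‖y - x‖ ^ 2 ≤ F y := by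
  set v := y - x
  have key := le_add_deriv_add_half_of_deriv_sub_le (φ := fun t => -F (x + t • v))
    (fun t => (hF _).hasDerivAt_comp_add_smul.neg) (c := -(μ * ‖v‖ ^ 2)) fun t ht => by
      have hmono := hsc (x + t • v) x
      rw [add_sub_cancel_left, norm_smul, real_inner_smul_right, Real.norm_of_nonneg ht.1.le]
        at hmono
      have : μ * ‖v‖ ^ 2 * t ≤ ⟪F' (x + t • v) - F' x, v⟫ := by nlinarith [ht.1]
      rw [zero_smul, add_zero]
      rw [inner_sub_left] at this
      linarith
  simp only [zero_smul, add_zero, one_smul, v, add_sub_cancel] at key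
  linarith

theorem sq_norm_sub_add_mul_sq_le_inner_of_strongly_monotone_lipschitz
    (hF : ∀ x, HasGradientAt F (F' x) x) {μ L : ℝ} (hμ : 0 ≤ μ) (hμL : μ ≤ L)
    (hsc : ∀ x y, μ * ‖x - y‖ ^ 2 ≤ ⟪F' x - F' y, x - y⟫)
    (hlip : ∀ x y, ‖F' x - F' y‖ ≤ L * ‖x - y‖) (x y : H) :
    ‖F' x - F' y‖ ^ 2 + μ * L * ‖x - y‖ ^ 2 ≤ (μ + L) * ⟪F' x - F' y, x - y⟫ := by
  rcases hμL.eq_or_lt with rfl | hlt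
  · have hD : ‖F' x - F' y‖ ^ 2 ≤ (μ * ‖x - y‖) ^ 2 :=
      pow_le_pow_left₀ (norm_nonneg _) (hlip x y) 2
    nlinarith [hsc x y]
  have hexp : ∀ x y : H, ‖y‖ ^ 2 = ‖x‖ ^ 2 + 2 * ⟪x, y - x⟫ + ‖y - x‖ ^ 2 := fun x y => by
    rw [← norm_add_sq_real, add_sub_cancel]
  have hcoco := sq_norm_sub_le_mul_inner_of_quadratic_bounds (h := fun w => F w - μ / 2 * ‖w‖ ^ 2)
    (G := fun w => F' w - μ • w) (sub_pos.2 hlt)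
    (fun x y => by
      simp only [inner_sub_left, real_inner_smul_left]
      linear_combination add_inner_add_sq_le_of_strongly_monotone_gradient hF hsc x y
        + μ / 2 * hexp x y)
    (fun x y => by
      simp only [inner_sub_left, real_inner_smul_left]
      linear_combination le_add_inner_add_sq_of_lipschitz_gradient hF hlip x y
        - μ / 2 * hexp x y) x y
  rw [show F' x - μ • x - (F' y - μ • y) = (F' x - F' y) - μ • (x - y) by rw [smul_sub]; abel]
    at hcoco
  generalize F' x - F' y = D at hcoco ⊢
  generalize x - y = w at hcoco ⊢
  rw [norm_sub_sq_real, inner_sub_left, real_inner_smul_right, real_inner_smul_left, norm_smul,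
    Real.norm_of_nonneg hμ, real_inner_self_eq_norm_sq] at hcoco
  linear_combination hcoco

theorem norm_sub_smul_sub_le_of_gradient (hF : ∀ x, HasGradientAt F (F' x) x) {μ L α : ℝ}
    (hμ : 0 < μ) (hμL : μ ≤ L) (hsc : ∀ x y, μ * ‖x - y‖ ^ 2 ≤ ⟪F' x - F' y, x - y⟫)
    (hlip : ∀ x y, ‖F' x - F' y‖ ≤ L * ‖x - y‖) {zstar : H} (hzstar : F' zstar = 0)
    (hα : 0 ≤ α) (hαL : α * (μ + L) ≤ 2) (x g : H) :
    ‖x - α • g - zstar‖ ≤ (1 - α * μ) * ‖x - zstar‖ + α * ‖g - F' x‖ := by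
  have hexact := norm_sub_smul_le_of_inner_bounds hμ hμL (hsc x zstar)
    (sq_norm_sub_add_mul_sq_le_inner_of_strongly_monotone_lipschitz hF hμ.le hμL hsc hlip x zstar)
    hα hαL
  rw [hzstar, sub_zero] at hexact
  calc ‖x - α • g - zstar‖ = ‖(x - zstar - α • F' x) - α • (g - F' x)‖ := by
        rw [smul_sub]; congr 1; abel
    _ ≤ ‖x - zstar - α • F' x‖ + ‖α • (g - F' x)‖ := norm_sub_le _ _
    _ ≤ (1 - α * μ) * ‖x - zstar‖ + α * ‖g - F' x‖ := by
        rw [norm_smul, Real.norm_of_nonneg hα]; gcongr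

end Gradient

section Lp

variable {Ω E E' : Type*} {m0 : MeasurableSpace Ω} {P : Measure Ω}
  [NormedAddCommGroup E] [NormedAddCommGroup E']

theorem MeasureTheory.MemLp.eLpNorm_two_eq_ofReal_sqrt {f : Ω → E} (hf : MemLp f 2 P) :
    eLpNorm f 2 P = ENNReal.ofReal √(∫ ω, ‖f ω‖ ^ 2 ∂P) := by
  rw [hf.eLpNorm_eq_integral_rpow_norm two_ne_zero ENNReal.ofNat_ne_top, Real.sqrt_eq_rpow]
  norm_num

theorem eLpNorm_two_le_of_integral_sq_le {f : Ω → E} {g : Ω → E'} (hf : MemLp f 2 P)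
    (hg : MemLp g 2 P) {c : ℝ} (hc : 0 ≤ c)
    (h : ∫ ω, ‖f ω‖ ^ 2 ∂P ≤ c ^ 2 * ∫ ω, ‖g ω‖ ^ 2 ∂P) :
    eLpNorm f 2 P ≤ ENNReal.ofReal c * eLpNorm g 2 P := by
  rw [hf.eLpNorm_two_eq_ofReal_sqrt, hg.eLpNorm_two_eq_ofReal_sqrt, ← ENNReal.ofReal_mul hc,
    ← Real.sqrt_sq hc, ← Real.sqrt_mul (sq_nonneg c)]
  exact ENNReal.ofReal_le_ofReal (Real.sqrt_le_sqrt h)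

theorem eLpNorm_two_le_of_condExp_sq_le {m : MeasurableSpace Ω} (hm : m ≤ m0)
    [SigmaFinite (P.trim hm)] {f : Ω → E} {g : Ω → E'} (hf : MemLp f 2 P) (hg : MemLp g 2 P)
    {c : ℝ} (hc : 0 ≤ c) (h : P[fun ω => ‖f ω‖ ^ 2 | m] ≤ᵐ[P] fun ω => c ^ 2 * ‖g ω‖ ^ 2) :
    eLpNorm f 2 P ≤ ENNReal.ofReal c * eLpNorm g 2 P := by
  refine eLpNorm_two_le_of_integral_sq_le hf hg hc ?_
  calc ∫ ω, ‖f ω‖ ^ 2 ∂P = ∫ ω, (P[fun ω => ‖f ω‖ ^ 2 | m]) ω ∂P := (integral_condExp hm).symm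
    _ ≤ ∫ ω, c ^ 2 * ‖g ω‖ ^ 2 ∂P :=
      integral_mono_ae integrable_condExp (hg.norm.integrable_sq.const_mul _) h
    _ = c ^ 2 * ∫ ω, ‖g ω‖ ^ 2 ∂P := integral_const_mul _ _

theorem eLpNorm_le_mul_of_norm_le_add {u u' : Ω → E} {e : Ω → E'}
    (hu : AEStronglyMeasurable u P) (he : AEStronglyMeasurable e P) {p : ℝ≥0∞} (hp : 1 ≤ p)
    {q a c : ℝ} (hq : 0 ≤ q) (ha : 0 ≤ a) (hc : 0 ≤ c)
    (hpt : ∀ ω, ‖u' ω‖ ≤ q * ‖u ω‖ + a * ‖e ω‖)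
    (hec : eLpNorm e p P ≤ ENNReal.ofReal c * eLpNorm u p P) :
    eLpNorm u' p P ≤ ENNReal.ofReal (q + a * c) * eLpNorm u p P := by
  calc eLpNorm u' p P ≤ eLpNorm (fun ω => q * ‖u ω‖ + a * ‖e ω‖) p P := eLpNorm_mono_real hpt
    _ ≤ eLpNorm (fun ω => q * ‖u ω‖) p P + eLpNorm (fun ω => a * ‖e ω‖) p P :=
      eLpNorm_add_le (hu.norm.const_mul q) (he.norm.const_mul a) hp
    _ ≤ ENNReal.ofReal q * eLpNorm u p P + ENNReal.ofReal a * eLpNorm e p P :=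
      add_le_add
        (eLpNorm_le_mul_eLpNorm_of_ae_le_mul
          (ae_of_all _ fun ω => (Real.norm_of_nonneg (by positivity)).le) p)
        (eLpNorm_le_mul_eLpNorm_of_ae_le_mul
          (ae_of_all _ fun ω => (Real.norm_of_nonneg (by positivity)).le) p)
    _ ≤ ENNReal.ofReal q * eLpNorm u p P
          + ENNReal.ofReal a * (ENNReal.ofReal c * eLpNorm u p P) := by
      grw [hec]
    _ = ENNReal.ofReal (q + a * c) * eLpNorm u p P := by
      rw [ENNReal.ofReal_add hq (mul_nonneg ha hc), ENNReal.ofReal_mul ha]; ring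

theorem eLpNorm_perturbed_step_sub_le [NormedSpace ℝ E] [IsFiniteMeasure P]
    {m : MeasurableSpace Ω} (hm : m ≤ m0) [SigmaFinite (P.trim hm)] {T : E → E}
    (hT : Continuous T) {zstar : E} {q α L θ : ℝ}
    (hq : 0 ≤ q) (hα : 0 ≤ α) (hL : 0 ≤ L) (hθ : 0 ≤ θ)
    (hdet : ∀ x g, ‖x - α • g - zstar‖ ≤ q * ‖x - zstar‖ + α * ‖g - T x‖)
    (hTL : ∀ x, ‖T x‖ ≤ L * ‖x - zstar‖) {x g : Ω → E} (hx : MemLp x 2 P) (hg : MemLp g 2 P)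
    (hnorm : P[fun ω => ‖g ω - T (x ω)‖ ^ 2 | m] ≤ᵐ[P] fun ω => θ ^ 2 * ‖T (x ω)‖ ^ 2) :
    eLpNorm (fun ω => x ω - α • g ω - zstar) 2 P
      ≤ ENNReal.ofReal (q + α * (θ * L)) * eLpNorm (fun ω => x ω - zstar) 2 P := by
  have hu : MemLp (fun ω => x ω - zstar) 2 P := hx.sub (memLp_const zstar)
  have hTx : MemLp (fun ω => T (x ω)) 2 P :=
    hu.of_le_mul (hT.comp_aestronglyMeasurable hx.aestronglyMeasurable) (ae_of_all _ (hTL <| x ·))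
  have herr : eLpNorm (fun ω => g ω - T (x ω)) 2 P
      ≤ ENNReal.ofReal (θ * L) * eLpNorm (fun ω => x ω - zstar) 2 P := by
    rw [ENNReal.ofReal_mul hθ, mul_assoc]
    exact (eLpNorm_two_le_of_condExp_sq_le hm (hg.sub hTx) hTx hθ hnorm).trans
      (mul_le_mul_right (eLpNorm_le_mul_eLpNorm_of_ae_le_mul (ae_of_all _ (hTL <| x ·)) 2) _)
  exact eLpNorm_le_mul_of_norm_le_add hu.aestronglyMeasurable (hg.sub hTx).aestronglyMeasurable
    one_le_two hq hα (mul_nonneg hθ hL) (fun ω => hdet (x ω) (g ω)) herr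

theorem integral_norm_le_of_eLpNorm_le [IsProbabilityMeasure P] {f : Ω → E}
    (hf : AEStronglyMeasurable f P) {p : ℝ≥0∞} (hp : 1 ≤ p) {r : ℝ} (hr : 0 ≤ r)
    (h : eLpNorm f p P ≤ ENNReal.ofReal r) : ∫ ω, ‖f ω‖ ∂P ≤ r := by
  rw [integral_norm_eq_lintegral_enorm hf, ← eLpNorm_one_eq_lintegral_enorm]
  exact ENNReal.toReal_le_of_le_ofReal hr ((eLpNorm_le_eLpNorm_of_exponent_le hp hf).trans h)

end Lp

theorem adaptive_sampling_linear_convergence_general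
    {H : Type*} [NormedAddCommGroup H] [InnerProductSpace ℝ H] [CompleteSpace H]
    (F : H → ℝ) (Fgrad : H → H) (hF : ∀ x, HasGradientAt F (Fgrad x) x)
    (μc L : ℝ) (hμc : 0 < μc) (hμL : μc ≤ L)
    (hsc : ∀ x y : H, μc * ‖x - y‖ ^ 2 ≤ ⟪Fgrad x - Fgrad y, x - y⟫)
    (hlip : ∀ x y : H, ‖Fgrad x - Fgrad y‖ ≤ L * ‖x - y‖)
    (zstar : H) (hzstar : Fgrad zstar = 0)
    {Ω : Type*} {m0 : MeasurableSpace Ω} (P : Measure Ω) [IsProbabilityMeasure P]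
    (ℱ : Filtration ℕ m0)
    (z0 : H) (z g : ℕ → Ω → H)
    (hz0 : z 0 = fun _ => z0)
    (hz2 : ∀ k, MemLp (z k) 2 P) (hg2 : ∀ k, MemLp (g k) 2 P)
    (θ α : ℝ) (hθ0 : 0 ≤ θ) (hθ : θ < μc / L)
    (hiter : ∀ k, ∀ ω, z (k + 1) ω = z k ω - α • g k ω)
    (hα : α ∈ Set.Ioc (0 : ℝ) (2 / (μc + L)))
    (hnorm : ∀ k, ∀ᵐ ω ∂P,
      (P[fun ω' => ‖g k ω' - Fgrad (z k ω')‖ ^ 2|ℱ k]) ω ≤ θ ^ 2 * ‖Fgrad (z k ω)‖ ^ 2)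
    (ϱ : ℝ) (hϱ : ϱ = 1 - α * (μc - θ * L)) :
    ϱ ∈ Set.Ico (0 : ℝ) 1 ∧
      ∀ k : ℕ, ∫ ω, ‖z k ω - zstar‖ ∂P ≤ ϱ ^ k * ‖z0 - zstar‖ := by
  obtain ⟨hα0, hα⟩ := hα
  have hL : 0 < L := hμc.trans_le hμL
  have hθL : θ * L < μc := (lt_div_iff₀ hL).1 hθ
  have hαL : α * (μc + L) ≤ 2 := (le_div_iff₀ (by linarith)).1 hα
  have hαμ : 0 ≤ 1 - α * μc := by nlinarith
  have hϱ0 : 0 ≤ ϱ := by rw [hϱ]; nlinarith [mul_nonneg hθ0 hL.le]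
  refine ⟨⟨hϱ0, by rw [hϱ]; nlinarith⟩, ?_⟩
  have hcont : Continuous Fgrad :=
    (LipschitzWith.of_dist_le' fun x y => by simpa only [dist_eq_norm] using hlip x y).continuous
  have hstep : ∀ k, eLpNorm (fun ω => z (k + 1) ω - zstar) 2 P
      ≤ ENNReal.ofReal ϱ * eLpNorm (fun ω => z k ω - zstar) 2 P := fun k => by
    simp only [hiter]
    rw [hϱ, show 1 - α * (μc - θ * L) = (1 - α * μc) + α * (θ * L) by ring]
    exact eLpNorm_perturbed_step_sub_le (ℱ.le k) hcont hαμ hα0.le hL.le hθ0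
      (norm_sub_smul_sub_le_of_gradient hF hμc hμL hsc hlip hzstar hα0.le hαL)
      (fun x => by simpa [hzstar] using hlip x zstar) (hz2 k) (hg2 k) (hnorm k)
  have hgeom : ∀ k, eLpNorm (fun ω => z k ω - zstar) 2 P
      ≤ ENNReal.ofReal (ϱ ^ k * ‖z0 - zstar‖) := by
    intro k
    induction k with
    | zero =>
      simp only [hz0, pow_zero, one_mul, ofReal_norm]
      rw [eLpNorm_const _ two_ne_zero (IsProbabilityMeasure.ne_zero P)]
      simp
    | succ k ih =>
      rw [pow_succ', mul_assoc, ENNReal.ofReal_mul hϱ0]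
      exact (hstep k).trans (mul_le_mul_right ih _)
  exact fun k => integral_norm_le_of_eLpNorm_le
    ((hz2 k).sub (memLp_const zstar)).aestronglyMeasurable one_le_two (by positivity) (hgeom k)

/-- Linear convergence in expectation of the adaptive sampling gradient iteration
`z_{k+1} = z_k - α g_k` under the conditional norm-test condition (Theorem 1). -/
theorem adaptive_sampling_linear_convergence
    {H : Type*} [NormedAddCommGroup H] [InnerProductSpace ℝ H] [CompleteSpace H]
    [MeasurableSpace H] [BorelSpace H]
    (F : H → ℝ) (Fgrad : H → H) (hF : ∀ x, HasGradientAt F (Fgrad x) x)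
    (μc L : ℝ) (hμc : 0 < μc) (hμL : μc ≤ L)
    (hsc : ∀ x y : H, μc * ‖x - y‖ ^ 2 ≤ ⟪Fgrad x - Fgrad y, x - y⟫)
    (hlip : ∀ x y : H, ‖Fgrad x - Fgrad y‖ ≤ L * ‖x - y‖)
    (zstar : H) (hzstar : Fgrad zstar = 0)
    {Ω : Type*} {m0 : MeasurableSpace Ω} (P : Measure Ω) [IsProbabilityMeasure P]
    (ℱ : Filtration ℕ m0)
    (z0 : H) (z g : ℕ → Ω → H)
    (hz0 : z 0 = fun _ => z0)
    (hzmeas : ∀ k, StronglyMeasurable[ℱ k] (z k))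
    (hz2 : ∀ k, MemLp (z k) 2 P) (hg2 : ∀ k, MemLp (g k) 2 P)
    (θ α : ℝ) (hθ0 : 0 ≤ θ) (hθ : θ < μc / L)
    (hiter : ∀ k, ∀ ω, z (k + 1) ω = z k ω - α • g k ω)
    (hα : α ∈ Set.Ioc (0 : ℝ) (2 / (μc + L)))
    (hnorm : ∀ k, ∀ᵐ ω ∂P,
      (P[fun ω' => ‖g k ω' - Fgrad (z k ω')‖ ^ 2|ℱ k]) ω ≤ θ ^ 2 * ‖Fgrad (z k ω)‖ ^ 2)
    (ϱ : ℝ) (hϱ : ϱ = 1 - α * (μc - θ * L)) :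
    ϱ ∈ Set.Ico (0 : ℝ) 1 ∧
      ∀ k : ℕ, ∫ ω, ‖z k ω - zstar‖ ∂P ≤ ϱ ^ k * ‖z0 - zstar‖ :=
  adaptive_sampling_linear_convergence_general F Fgrad hF μc L hμc hμL hsc hlip zstar hzstar P ℱ z0
    z g hz0 hz2 hg2 θ α hθ0 hθ hiter hα hnorm ϱ hϱ
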